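/- arXiv:2001.11333 — 2 statements merged into one kernel-verified Lean document; each statement's English description precedes it below -/
import Mathlib

section
/- The waiting-time law of the Geo/Geo/1 queue is a probability distribution: with W⁰ = (d−α)/d and Wᵐ = Σ_{v=1}^{m} x_v·C(m−1, v−1)·d^v·(1−d)^{m−v} for m ≥ 1, one has Σ_{m=0}^{∞} Wᵐ = 1; in particular Σ_{m=1}^{∞} Wᵐ = α/d. -/
/-!
Conditioning on the `v ≥ 1` customers found on arrival, the waiting time `m + 1` is a negative
binomial event; since `x v` is geometric in `v`, the binomial theorem collapses the sum to
`W (m + 1) = c qᵐ` with `q = (1 - d) / (1 - α)` and `c = α (d - α) / (d (1 - α))`, and the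
geometric series gives `∑ₘ W (m + 1) = c / (1 - q) = α / d`.
-/

open Finset

theorem sum_Icc_pow_mul_pow_mul_choose_pred {S : Type*} [CommSemiring S] (a b : S) (m : ℕ) :
    ∑ v ∈ Icc 1 (m + 1), a ^ v * b ^ (m + 1 - v) * (m.choose (v - 1) : S) =
      a * (a + b) ^ m := by
  rw [← Ico_add_one_right_eq_Icc, sum_Ico_eq_sum_range, add_pow, mul_sum]
  refine sum_congr rfl fun k hk => ?_
  have hk : k ≤ m := Nat.lt_succ_iff.mp (mem_range.mp hk)
  rw [Nat.add_sub_cancel_left, show m + 1 - (1 + k) = m - k by omega, pow_add]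
  ring

theorem sum_Icc_geometric_mul_choose_pred {S : Type*} [CommSemiring S] (x : ℕ → S) (K r d e : S)
    (hx : ∀ v, 1 ≤ v → x v = K * r ^ v) (m : ℕ) :
    ∑ v ∈ Icc 1 (m + 1), x v * (m.choose (v - 1) : S) * d ^ v * e ^ (m + 1 - v) =
      K * (r * d) * (r * d + e) ^ m := by
  rw [mul_assoc K, ← sum_Icc_pow_mul_pow_mul_choose_pred, mul_sum]
  refine sum_congr rfl fun v hv => ?_
  rw [hx v (mem_Icc.mp hv).1, mul_pow]
  ring

theorem geo_geo_one_waiting_time_succ {α d R : ℝ} (hα : 0 < α) (hαd : α < d) (hd : d < 1)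
    (hR : R = α * (1 - d) / ((1 - α) * d)) {x : ℕ → ℝ} (hx0 : x 0 = (d - α) / d)
    (hx : ∀ i : ℕ, 1 ≤ i → x i = R ^ i * x 0 / (1 - d)) (m : ℕ) :
    ∑ v ∈ Icc 1 (m + 1), x v * (m.choose (v - 1) : ℝ) * d ^ v * (1 - d) ^ (m + 1 - v) =
      α * (d - α) / (d * (1 - α)) * ((1 - d) / (1 - α)) ^ m := by
  have hd0 : d ≠ 0 := (hα.trans hαd).ne'
  have h1d : 1 - d ≠ 0 := by linarith
  have h1α : 1 - α ≠ 0 := by linarith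
  have hxK : ∀ v, 1 ≤ v → x v = x 0 / (1 - d) * R ^ v := fun v hv => by
    rw [hx v hv]; ring
  rw [sum_Icc_geometric_mul_choose_pred x _ R d _ hxK]
  have hratio : R * d + (1 - d) = (1 - d) / (1 - α) := by
    rw [hR]; field_simp; ring
  have hconst : x 0 / (1 - d) * (R * d) = α * (d - α) / (d * (1 - α)) := by
    rw [hx0, hR]; field_simp
  rw [hratio, hconst]

theorem tsum_geo_geo_one_waiting_time_succ {α d : ℝ} (hα : 0 < α) (hαd : α < d) (hd : d < 1) :
    ∑' m : ℕ, α * (d - α) / (d * (1 - α)) * ((1 - d) / (1 - α)) ^ m = α / d := by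
  have hd0 : d ≠ 0 := (hα.trans hαd).ne'
  have h1α : 0 < 1 - α := by linarith
  have hdα : d - α ≠ 0 := by linarith
  have hq0 : 0 ≤ (1 - d) / (1 - α) := div_nonneg (by linarith) h1α.le
  have hq1 : (1 - d) / (1 - α) < 1 := (div_lt_one h1α).mpr (by linarith)
  rw [tsum_mul_left, tsum_geometric_of_lt_one hq0 hq1,
    show 1 - (1 - d) / (1 - α) = (d - α) / (1 - α) by field_simp; ring, inv_div]
  field_simp

theorem summable_geo_geo_one_waiting_time_succ {α d : ℝ} (hαd : α < d) (hd : d < 1) :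
    Summable fun m : ℕ => α * (d - α) / (d * (1 - α)) * ((1 - d) / (1 - α)) ^ m := by
  have h1α : 0 < 1 - α := by linarith
  exact (summable_geometric_of_lt_one (div_nonneg (by linarith) h1α.le)
    ((div_lt_one h1α).mpr (by linarith))).mul_left _

/-- The waiting-time law of the Geo/Geo/1 queue is a probability distribution:
`∑_{m=0}^∞ W m = 1`, and in particular `∑_{m=1}^∞ W m = α/d`. -/
theorem geo_geo_one_waiting_time_prob (α d : ℝ) (hα : 0 < α) (hαd : α < d) (hd : d < 1)
    (R : ℝ) (hR : R = α * (1 - d) / ((1 - α) * d))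
    (x : ℕ → ℝ) (hx0 : x 0 = (d - α) / d)
    (hx : ∀ i : ℕ, 1 ≤ i → x i = R ^ i * x 0 / (1 - d))
    (W : ℕ → ℝ) (hW0 : W 0 = (d - α) / d)
    (hW : ∀ m : ℕ, 1 ≤ m →
      W m = ∑ v ∈ Finset.Icc 1 m,
        x v * ((m - 1).choose (v - 1) : ℝ) * d ^ v * (1 - d) ^ (m - v)) :
    (∑' m : ℕ, W m) = 1 ∧ (∑' m : ℕ, W (m + 1)) = α / d := by
  have hW_succ : ∀ m, W (m + 1) = α * (d - α) / (d * (1 - α)) * ((1 - d) / (1 - α)) ^ m :=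
    fun m => by
      rw [hW (m + 1) m.succ_pos, Nat.add_sub_cancel]
      exact geo_geo_one_waiting_time_succ hα hαd hd hR hx0 hx m
  have htail : ∑' m : ℕ, W (m + 1) = α / d := by
    simp_rw [hW_succ]; exact tsum_geo_geo_one_waiting_time_succ hα hαd hd
  have hsummable : Summable W := (summable_nat_add_iff 1).mp <|
    (summable_geo_geo_one_waiting_time_succ hαd hd).congr fun m => (hW_succ m).symm
  refine ⟨?_, htail⟩
  rw [hsummable.tsum_eq_zero_add, htail, hW0]
  field_simp [(hα.trans hαd).ne']
  ring
end

section
/- The mean waiting time of a packet in the Geo/Geo/1 queue has the closed form Σ_{m=0}^{∞} m·Wᵐ = α(1−α)/(d(d−α)). -/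
/-!
Conditioning on the queue length `v ≥ 1` found on arrival, the waiting time is a negative
binomial sum of `v` geometric service times. Since `x v` is geometric in `v`, the binomial
theorem makes `W (n + 1)` geometric in `n` with ratio `q = R d + (1 - d) = (1 - d) / (1 - α)`, and
the mean is `W 1 / (1 - q) ^ 2`, the derivative of a geometric series.
-/

open Finset

theorem sum_Icc_pow_mul_choose_mul_pow {S : Type*} [CommSemiring S] (a b : S) (n : ℕ) :
    ∑ v ∈ Icc 1 (n + 1), a ^ v * (n.choose (v - 1) : S) * b ^ (n + 1 - v) =
      a * (a + b) ^ n := by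
  rw [← Ico_add_one_right_eq_Icc, sum_Ico_eq_sum_range, add_pow, mul_sum]
  refine sum_congr (by simp) fun i _ => ?_
  rw [Nat.add_sub_cancel_left, show n + 1 - (1 + i) = n - i by omega, pow_add]
  ring

theorem hasSum_coe_mul_of_succ_eq_geometric {𝕜 : Type*} [NormedDivisionRing 𝕜]
    {f : ℕ → 𝕜} {c q : 𝕜} (hq : ‖q‖ < 1) (hf : ∀ n, f (n + 1) = c * q ^ n) :
    HasSum (fun m : ℕ => (m : 𝕜) * f m) (c / (1 - q) ^ 2) := by
  rw [← hasSum_nat_add_iff' 1]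
  simp only [sum_range_one, Nat.cast_zero, zero_mul, sub_zero, hf]
  have h := (hasSum_choose_mul_geometric_of_norm_lt_one 1 hq).mul_left c
  simp only [Nat.choose_one_right, mul_one_div, one_add_one_eq_two] at h
  refine h.congr_fun fun n => ?_
  rw [← mul_assoc, ← mul_assoc, Nat.cast_comm]

theorem geo_geo_one_mean_waiting_time_general (α d : ℝ) (hα : 0 < α) (hαd : α < d) (hd : d < 1)
    (R : ℝ) (hR : R = α * (1 - d) / ((1 - α) * d))
    (x : ℕ → ℝ) (hx0 : x 0 = (d - α) / d)
    (hx : ∀ i : ℕ, 1 ≤ i → x i = R ^ i * x 0 / (1 - d))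
    (W : ℕ → ℝ)
    (hW : ∀ m : ℕ, 1 ≤ m →
      W m = ∑ v ∈ Finset.Icc 1 m,
        x v * ((m - 1).choose (v - 1) : ℝ) * d ^ v * (1 - d) ^ (m - v)) :
    (∑' m : ℕ, (m : ℝ) * W m) = α * (1 - α) / (d * (d - α)) := by
  have hd0 : 0 < d := hα.trans hαd
  have h1α : 0 < 1 - α := by linarith
  have h1d : 0 < 1 - d := by linarith
  have hW_succ : ∀ n : ℕ, W (n + 1) = x 0 / (1 - d) * (R * d) * (R * d + (1 - d)) ^ n := by
    intro n
    rw [hW (n + 1) (by omega), mul_assoc, ← sum_Icc_pow_mul_choose_mul_pow, mul_sum]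
    refine sum_congr rfl fun v hv => ?_
    rw [hx v (mem_Icc.1 hv).1, Nat.add_sub_cancel]
    ring
  have hq : R * d + (1 - d) = (1 - d) / (1 - α) := by
    rw [hR]
    field_simp
    ring
  have hq_norm : ‖R * d + (1 - d)‖ < 1 := by
    rw [hq, Real.norm_eq_abs, abs_of_pos (div_pos h1d h1α), div_lt_one h1α]
    linarith
  have h1q : 1 - (1 - d) / (1 - α) = (d - α) / (1 - α) := by
    field_simp
    ring
  rw [(hasSum_coe_mul_of_succ_eq_geometric hq_norm hW_succ).tsum_eq, hq, h1q, hx0, hR]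
  field_simp

/-- Mean waiting time of a packet in the Geo/Geo/1 queue:
`∑_{m=0}^∞ m * W m = α(1-α)/(d(d-α))`. -/
theorem geo_geo_one_mean_waiting_time (α d : ℝ) (hα : 0 < α) (hαd : α < d) (hd : d < 1)
    (R : ℝ) (hR : R = α * (1 - d) / ((1 - α) * d))
    (x : ℕ → ℝ) (hx0 : x 0 = (d - α) / d)
    (hx : ∀ i : ℕ, 1 ≤ i → x i = R ^ i * x 0 / (1 - d))
    (W : ℕ → ℝ) (hW0 : W 0 = (d - α) / d)
    (hW : ∀ m : ℕ, 1 ≤ m →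
      W m = ∑ v ∈ Finset.Icc 1 m,
        x v * ((m - 1).choose (v - 1) : ℝ) * d ^ v * (1 - d) ^ (m - v)) :
    (∑' m : ℕ, (m : ℝ) * W m) = α * (1 - α) / (d * (d - α)) :=
  geo_geo_one_mean_waiting_time_general α d hα hαd hd R hR x hx0 hx W hW
end
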